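/- Let n ≥ 1, let d be a divisor of n, and let H be an irreducible subgroup of SL(n,ℂ). Set U_d(H) := π_d⁻¹(Z_d(H)) = {g ∈ SL(n,ℂ) : ∀ h ∈ H, ghg⁻¹h⁻¹ ∈ ⟨ξ^{n/d}·I⟩}. Then the image π_n(U_d(H)), which is a subgroup of Z_n(H), equals the d-torsion subgroup of Z_n(H), i.e. π_n(U_d(H)) = {a ∈ Z_n(H) : a^d = 1}. -/

import Mathlib

open Matrix

noncomputable section

abbrev SLC (n : ℕ) : Type := Matrix.SpecialLinearGroup (Fin n) ℂ

def xi (n : ℕ) : ℂ := Complex.exp (2 * Real.pi * Complex.I / n)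

lemma xi_pow_self (n : ℕ) (hn : n ≠ 0) : xi n ^ n = 1 := by
  have h : (n : ℂ) ≠ 0 := Nat.cast_ne_zero.mpr hn
  have h2 : (n : ℂ) * (2 * Real.pi * Complex.I / n) = 2 * Real.pi * Complex.I := by
    field_simp
  simp only [xi]
  rw [← Complex.exp_nat_mul, h2, Complex.exp_two_pi_mul_I]

def xiSL (n : ℕ) : SLC n :=
  if hn : n = 0 then 1 else
    ⟨xi n • (1 : Matrix (Fin n) (Fin n) ℂ), by
      rw [Matrix.det_smul, Matrix.det_one, Fintype.card_fin, mul_one, xi_pow_self n hn]⟩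

lemma xiSL_mem_center (n : ℕ) : xiSL n ∈ Subgroup.center (SLC n) := by
  rw [Subgroup.mem_center_iff]
  intro g
  by_cases hn : n = 0
  · simp [xiSL, hn]
  · have h : ((xiSL n : SLC n) : Matrix (Fin n) (Fin n) ℂ) = xi n • 1 := by
      simp [xiSL, hn]
    apply Subtype.ext
    show (g : Matrix (Fin n) (Fin n) ℂ) * (xiSL n : Matrix (Fin n) (Fin n) ℂ) =
      (xiSL n : Matrix (Fin n) (Fin n) ℂ) * g
    rw [h, mul_smul_comm, smul_mul_assoc, mul_one, one_mul]

def centerSL (n : ℕ) : Subgroup (SLC n) := Subgroup.zpowers (xiSL n)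

instance centerSL_normal (n : ℕ) : (centerSL n).Normal := by
  constructor
  intro x hx g
  have hc : g * x = x * g :=
    Subgroup.mem_center_iff.mp ((Subgroup.zpowers_le.mpr (xiSL_mem_center n)) hx) g
  have h : g * x * g⁻¹ = x := by rw [hc, mul_inv_cancel_right]
  rwa [h]

abbrev PSLC (n : ℕ) : Type := SLC n ⧸ centerSL n

def pin (n : ℕ) : SLC n →* PSLC n := QuotientGroup.mk' (centerSL n)

def IsIrreducibleSL (n : ℕ) (H : Subgroup (SLC n)) : Prop :=
  ∀ W : Submodule ℂ (Fin n → ℂ),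
    (∀ h ∈ H, ∀ v ∈ W, Matrix.mulVec (h : Matrix (Fin n) (Fin n) ℂ) v ∈ W) →
      W = ⊥ ∨ W = ⊤

def Zc (n : ℕ) (H : Subgroup (SLC n)) : Subgroup (PSLC n) :=
  Subgroup.centralizer ((H.map (pin n) : Subgroup (PSLC n)) : Set (PSLC n))

def Un (n : ℕ) (H : Subgroup (SLC n)) : Subgroup (SLC n) :=
  (Zc n H).comap (pin n)

def IsIrreduciblePSL (n : ℕ) (K : Subgroup (PSLC n)) : Prop :=
  IsIrreducibleSL n (K.comap (pin n))

def ConjSub {G : Type*} [Group G] (A B : Subgroup G) : Prop :=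
  ∃ g : G, A.map (MulAut.conj g).toMonoidHom = B

/-- The central subgroup of `SL(n,ℂ)` of order `d` (for `d ∣ n`), generated by `ξ^{n/d}·I`. -/
def centerSLd (n d : ℕ) : Subgroup (SLC n) := Subgroup.zpowers (xiSL n ^ (n / d))

instance centerSLd_normal (n d : ℕ) : (centerSLd n d).Normal := by
  constructor
  intro x hx g
  have hmem : x ∈ Subgroup.center (SLC n) :=
    (Subgroup.zpowers_le.mpr (Subgroup.pow_mem _ (xiSL_mem_center n) (n / d))) hx
  have hc : g * x = x * g := Subgroup.mem_center_iff.mp hmem g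
  have h : g * x * g⁻¹ = x := by rw [hc, mul_inv_cancel_right]
  rwa [h]

/-- The quotient `π_d(SL(n,ℂ)) = SL(n,ℂ)/⟨ξ^{n/d}·I⟩`. -/
abbrev PSLCd (n d : ℕ) : Type := SLC n ⧸ centerSLd n d

def pid (n d : ℕ) : SLC n →* PSLCd n d := QuotientGroup.mk' (centerSLd n d)

/-- The `d`-centralizer `Z_d(H)`: the centralizer of `π_d(H)` in `π_d(SL(n,ℂ))`. -/
def Zd (n d : ℕ) (H : Subgroup (SLC n)) : Subgroup (PSLCd n d) :=
  Subgroup.centralizer ((H.map (pid n d) : Subgroup (PSLCd n d)) : Set (PSLCd n d))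

/-- The `d`-extended centralizer `U_d(H) = π_d⁻¹(Z_d(H))`. -/
def Ud (n d : ℕ) (H : Subgroup (SLC n)) : Subgroup (SLC n) :=
  (Zd n d H).comap (pid n d)

-- auxiliary lemmas to insert before stmt19

lemma xi_prim (n : ℕ) (hn : n ≠ 0) : IsPrimitiveRoot (xi n) n :=
  Complex.isPrimitiveRoot_exp n hn

lemma xiSL_pow_coe (n k : ℕ) (hn : n ≠ 0) :
    ((xiSL n ^ k : SLC n) : Matrix (Fin n) (Fin n) ℂ) = xi n ^ k • 1 := by
  rw [Matrix.SpecialLinearGroup.coe_pow]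
  have : ((xiSL n : SLC n) : Matrix (Fin n) (Fin n) ℂ) = xi n • 1 := by
    simp [xiSL, hn]
  rw [this, smul_pow, one_pow]

lemma xiSL_pow_self (n : ℕ) (hn : n ≠ 0) : xiSL n ^ n = 1 := by
  apply Subtype.ext
  rw [xiSL_pow_coe n n hn, xi_pow_self n hn, one_smul]
  rfl

lemma orderOf_xiSL (n : ℕ) (hn : n ≠ 0) : orderOf (xiSL n) = n := by
  have hdvd : orderOf (xiSL n) ∣ n := orderOf_dvd_of_pow_eq_one (xiSL_pow_self n hn)
  have h2 : xi n ^ orderOf (xiSL n) = 1 := by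
    have h := xiSL_pow_coe n (orderOf (xiSL n)) hn
    rw [pow_orderOf_eq_one] at h
    have h' := congrFun (congrFun (congrArg (fun M => (M : Matrix (Fin n) (Fin n) ℂ)) h)
      ⟨0, Nat.pos_of_ne_zero hn⟩) ⟨0, Nat.pos_of_ne_zero hn⟩
    simpa [Matrix.one_apply] using h'.symm
  exact Nat.dvd_antisymm hdvd (((xi_prim n hn).pow_eq_one_iff_dvd _).mp h2)

lemma centerSL_comm {n : ℕ} {z : SLC n} (hz : z ∈ centerSL n) (x : SLC n) :
    z * x = x * z :=
  (Subgroup.mem_center_iff.mp (Subgroup.zpowers_le.mpr (xiSL_mem_center n) hz) x).symm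

lemma centerSLd_le (n d : ℕ) : centerSLd n d ≤ centerSL n :=
  Subgroup.zpowers_le.mpr (Subgroup.pow_mem _ (Subgroup.mem_zpowers _) _)

lemma centerSLd_pow_d (n d : ℕ) (hn : n ≠ 0) (hd : d ∣ n) {z : SLC n}
    (hz : z ∈ centerSLd n d) : z ^ d = 1 := by
  obtain ⟨m, rfl⟩ := Subgroup.mem_zpowers_iff.mp hz
  rw [← zpow_natCast (((xiSL n ^ (n / d)) ^ m)) d, ← _root_.zpow_mul, mul_comm, _root_.zpow_mul,
    zpow_natCast, ← pow_mul, Nat.div_mul_cancel hd, xiSL_pow_self n hn, _root_.one_zpow]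

lemma pow_comm_aux {G : Type*} [Group G] {g h z : G} (hz : ∀ x, z * x = x * z)
    (hc : g * h = h * g * z) (k : ℕ) : g ^ k * h = h * g ^ k * z ^ k := by
  induction k with
  | zero => simp
  | succ k ih =>
    calc g ^ (k + 1) * h = g * (g ^ k * h) := by rw [pow_succ']; rw [mul_assoc]
      _ = g * (h * g ^ k * z ^ k) := by rw [ih]
      _ = (g * h) * (g ^ k * z ^ k) := by simp [mul_assoc]
      _ = (h * g * z) * (g ^ k * z ^ k) := by rw [hc]
      _ = h * g * ((z * g ^ k) * z ^ k) := by simp [mul_assoc]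
      _ = h * g * ((g ^ k * z) * z ^ k) := by rw [hz]
      _ = h * g ^ (k + 1) * z ^ (k + 1) := by
          rw [pow_succ' g, pow_succ' z]
          simp [mul_assoc, (hz (z ^ k)).symm]

/-- Schur's lemma for irreducible subgroups of `SL(n,ℂ)`. -/
lemma schur (n : ℕ) (hn : 1 ≤ n) (H : Subgroup (SLC n)) (hH : IsIrreducibleSL n H)
    (M : Matrix (Fin n) (Fin n) ℂ)
    (hM : ∀ h ∈ H, M * (h : Matrix (Fin n) (Fin n) ℂ) = (h : Matrix (Fin n) (Fin n) ℂ) * M) :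
    ∃ c : ℂ, M = c • 1 := by
  haveI : NeZero n := ⟨by omega⟩
  obtain ⟨c, hc⟩ := Module.End.exists_eigenvalue (Matrix.mulVecLin M)
  set W := Module.End.eigenspace (Matrix.mulVecLin M) c with hW
  have hinv : ∀ h ∈ H, ∀ v ∈ W, Matrix.mulVec (h : Matrix (Fin n) (Fin n) ℂ) v ∈ W := by
    intro h hh v hv
    rw [hW, Module.End.mem_eigenspace_iff] at hv ⊢
    simp only [Matrix.mulVecLin_apply] at hv ⊢
    rw [Matrix.mulVec_mulVec, hM h hh, ← Matrix.mulVec_mulVec, hv, Matrix.mulVec_smul]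
  rcases hH W hinv with hbot | htop
  · exact absurd hbot (Module.End.hasEigenvalue_iff.mp hc)
  · refine ⟨c, ?_⟩
    ext i j
    have hv : (Pi.single j 1 : Fin n → ℂ) ∈ W := htop ▸ Submodule.mem_top
    rw [hW, Module.End.mem_eigenspace_iff] at hv
    have h' := congrFun hv i
    simp only [Matrix.mulVecLin_apply, Matrix.mulVec_single, mul_one, Pi.smul_apply,
      Pi.single_apply, smul_eq_mul] at h'
    simp only [MulOpposite.op_one, one_smul] at h'
    rw [show M i j = M.col j i from rfl, h']
    simp [Matrix.one_apply, eq_comm]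

lemma scalar_mem_centerSL (n : ℕ) (hn : n ≠ 0) (g : SLC n) (c : ℂ)
    (hg : (g : Matrix (Fin n) (Fin n) ℂ) = c • 1) : g ∈ centerSL n := by
  have hc : c ^ n = 1 := by
    have hdet := g.prop
    rw [hg, Matrix.det_smul, Matrix.det_one, Fintype.card_fin, mul_one] at hdet
    exact hdet
  haveI : NeZero n := ⟨hn⟩
  obtain ⟨i, _, hi⟩ := (xi_prim n hn).eq_pow_of_pow_eq_one hc
  have heq : xiSL n ^ i = g := by
    apply Subtype.ext
    rw [xiSL_pow_coe n i hn, hi, hg]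
  exact heq ▸ Subgroup.pow_mem _ (Subgroup.mem_zpowers _) i

lemma centralizer_comap_iff {G : Type*} [Group G] (N : Subgroup G) [N.Normal]
    (H : Subgroup G) (g : G) :
    QuotientGroup.mk' N g ∈ Subgroup.centralizer
      ((H.map (QuotientGroup.mk' N) : Subgroup (G ⧸ N)) : Set (G ⧸ N)) ↔
    ∀ h ∈ H, g⁻¹ * h⁻¹ * g * h ∈ N := by
  rw [Subgroup.mem_centralizer_iff]
  constructor
  · intro hg h hh
    have h1 : QuotientGroup.mk' N h * QuotientGroup.mk' N g
        = QuotientGroup.mk' N g * QuotientGroup.mk' N h := hg _ ⟨h, hh, rfl⟩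
    rw [← _root_.map_mul, ← _root_.map_mul] at h1
    obtain ⟨z, hz, hz2⟩ := (QuotientGroup.mk'_eq_mk' N).mp h1
    have h5 : z = (h * g)⁻¹ * (g * h) := by rw [← hz2]; group
    have h6 : g⁻¹ * h⁻¹ * g * h = (h * g)⁻¹ * (g * h) := by group
    rw [h6, ← h5]; exact hz
  · intro hcom b hb
    obtain ⟨h, hh, rfl⟩ := hb
    rw [← _root_.map_mul, ← _root_.map_mul]
    exact (QuotientGroup.mk'_eq_mk' N).mpr ⟨g⁻¹ * h⁻¹ * g * h, hcom h hh, by group⟩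

lemma mem_Ud_iff' (n d : ℕ) (H : Subgroup (SLC n)) (g : SLC n) :
    g ∈ Ud n d H ↔ ∀ h ∈ H, g⁻¹ * h⁻¹ * g * h ∈ centerSLd n d :=
  centralizer_comap_iff (centerSLd n d) H g

lemma mem_Zc_iff' (n : ℕ) (H : Subgroup (SLC n)) (g : SLC n) :
    pin n g ∈ Zc n H ↔ ∀ h ∈ H, g⁻¹ * h⁻¹ * g * h ∈ centerSL n :=
  centralizer_comap_iff (centerSL n) H g

/-- Lemma 4.4: the image `π_n(U_d(H))` inside `Z_n(H)` is exactly the `d`-torsion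
subgroup of `Z_n(H)`. -/
theorem stmt19 (n d : ℕ) (hn : 1 ≤ n) (hd : d ∣ n)
    (H : Subgroup (SLC n)) (hH : IsIrreducibleSL n H) :
    ∀ a : PSLC n, a ∈ (Ud n d H).map (pin n) ↔ a ∈ Zc n H ∧ a ^ d = 1 := by
  intro a
  have hn0 : n ≠ 0 := by omega
  have hd0 : d ≠ 0 := fun h => hn0 (zero_dvd_iff.mp (h ▸ hd))
  constructor
  · intro ha
    obtain ⟨g, hg, rfl⟩ := Subgroup.mem_map.mp ha
    have hg' := (mem_Ud_iff' n d H g).mp hg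
    have hcomm : ∀ h ∈ H, g ^ d * h = h * g ^ d := by
      intro h hh
      have hz := hg' h hh
      have hzc : ∀ x, (g⁻¹ * h⁻¹ * g * h) * x = x * (g⁻¹ * h⁻¹ * g * h) :=
        fun x => centerSL_comm (centerSLd_le n d hz) x
      have hc : g * h = h * g * (g⁻¹ * h⁻¹ * g * h) := by group
      have h1 := pow_comm_aux hzc hc d
      rwa [centerSLd_pow_d n d hn0 hd hz, mul_one] at h1
    refine ⟨(mem_Zc_iff' n H g).mpr (fun h hh => centerSLd_le n d (hg' h hh)), ?_⟩
    show (pin n g) ^ d = 1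
    rw [← map_pow]
    refine (QuotientGroup.eq_one_iff _).mpr ?_
    have hM : ∀ h ∈ H, ((g ^ d : SLC n) : Matrix (Fin n) (Fin n) ℂ) * h
        = (h : Matrix (Fin n) (Fin n) ℂ) * ((g ^ d : SLC n) : Matrix (Fin n) (Fin n) ℂ) := by
      intro h hh
      have h2 := congrArg (fun x : SLC n => (x : Matrix (Fin n) (Fin n) ℂ)) (hcomm h hh)
      simpa using h2
    obtain ⟨c, hc⟩ := schur n hn H hH _ hM
    exact scalar_mem_centerSL n hn0 _ c hc
  · rintro ⟨hZ, hpow⟩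
    obtain ⟨g, rfl⟩ := QuotientGroup.mk'_surjective (centerSL n) a
    refine Subgroup.mem_map.mpr ⟨g, ?_, rfl⟩
    have hgd : g ^ d ∈ centerSL n := by
      have : (pin n (g ^ d)) = 1 := by rw [map_pow]; exact hpow
      exact (QuotientGroup.eq_one_iff _).mp this
    have hZ' := (mem_Zc_iff' n H g).mp hZ
    rw [mem_Ud_iff']
    intro h hh
    have hz := hZ' h hh
    obtain ⟨k, hk⟩ := Subgroup.mem_zpowers_iff.mp hz
    have hzc : ∀ x, (g⁻¹ * h⁻¹ * g * h) * x = x * (g⁻¹ * h⁻¹ * g * h) :=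
      fun x => centerSL_comm hz x
    have hc : g * h = h * g * (g⁻¹ * h⁻¹ * g * h) := by group
    have h1 := pow_comm_aux hzc hc d
    have h2 : g ^ d * h = h * g ^ d := centerSL_comm hgd h
    have h3 : (g⁻¹ * h⁻¹ * g * h) ^ d = 1 := by
      have h4 : h * g ^ d * (g⁻¹ * h⁻¹ * g * h) ^ d = h * g ^ d * 1 := by
        rw [← h1, h2, mul_one]
      exact mul_left_cancel h4
    rw [← hk] at h3 ⊢
    rw [← zpow_natCast (xiSL n ^ k) d, ← _root_.zpow_mul] at h3
    have hdvd : ((n : ℤ)) ∣ k * d := by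
      rw [← orderOf_xiSL n hn0]
      exact orderOf_dvd_iff_zpow_eq_one.mpr h3
    have hdvd2 : ((n / d : ℕ) : ℤ) ∣ k := by
      have hnd : ((n / d : ℕ) : ℤ) * d = n := by
        exact_mod_cast congrArg (Nat.cast : ℕ → ℤ) (Nat.div_mul_cancel hd)
      rw [← hnd] at hdvd
      exact (mul_dvd_mul_iff_right (by exact_mod_cast hd0 : (d : ℤ) ≠ 0)).mp hdvd
    obtain ⟨t, ht⟩ := hdvd2
    refine Subgroup.mem_zpowers_iff.mpr ⟨t, ?_⟩
    rw [← zpow_natCast (xiSL n) (n / d), ← _root_.zpow_mul, ← ht]
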